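/- In the non-parametric Bradley–Terry model, let p_{ij} ∈ [0,1] for i ≠ j with p_{ji} = 1 − p_{ij}, and suppose there is a total order on {1,…,n} such that if i is stronger than j then p_{ik} ≥ p_{jk} for all k ≠ i, j. Let M be the n×n matrix with entries p_{ij} for i ≠ j and 0 on the diagonal. Then for every integer 1 ≤ k < n, the nuclear norm satisfies ‖M‖_* ≤ sqrt(n)·sqrt(3n/k)·sqrt(n) + n·sqrt(k) = sqrt(3)·n^{3/2}/sqrt(k) + n·sqrt(k). In particular, choosing k = ⌊n^{1/2}⌋, ‖M‖_* ≤ C·n^{5/4} for a universal constant C. -/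

import Mathlib

noncomputable def singularValues {m n : ℕ} (A : Matrix (Fin m) (Fin n) ℝ) : Fin n → ℝ :=
  fun i => Real.sqrt ((Matrix.isHermitian_conjTranspose_mul_self A).eigenvalues i)

noncomputable def nuclearNorm {m n : ℕ} (A : Matrix (Fin m) (Fin n) ℝ) : ℝ :=
  ∑ i, singularValues A i

noncomputable def frobeniusNorm {m n : ℕ} (A : Matrix (Fin m) (Fin n) ℝ) : ℝ :=
  Real.sqrt (∑ i, ∑ j, (A i j)^2)

noncomputable def spectralNorm' {m n : ℕ} (A : Matrix (Fin m) (Fin n) ℝ) : ℝ :=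
  ⨆ i, singularValues A i

/-
The nuclear norm is subadditive, being the maximum of `∑ ⟪A xᵢ, yᵢ⟫` over orthogonal
families of vectors of norm at most one, and it is at most `√(rank A)` times the Frobenius norm.
Bucket the rows of `M` by their row sums into `k` intervals of length `n / k` and replace every row
by a representative of its bucket: the resulting `N` has rank at most `k` and Frobenius norm at
most `n`. By monotonicity two rows are comparable entrywise except in one coordinate, so their
squared distance is at most the difference of their row sums plus `2`; hence
`‖M - N‖_F² ≤ n (n / k + 2) ≤ 3 n² / k`, and `‖M‖_* ≤ √n ‖M - N‖_F + √k ‖N‖_F`.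
Taking `k = ⌊√n⌋` gives the bound `4 n^(5/4)`.
-/

open Finset Matrix

theorem mulVec_dotProduct_mulVec {ι κ : Type*} [Fintype ι] [Fintype κ] (A : Matrix ι κ ℝ)
    (x y : κ → ℝ) : (A *ᵥ x) ⬝ᵥ (A *ᵥ y) = x ⬝ᵥ (Aᴴ * A) *ᵥ y := by
  rw [← mulVec_mulVec, dotProduct_mulVec x, vecMul_conjTranspose]
  simp [dotProduct_mulVec]

section SingularVectors

variable {m n : ℕ} (A : Matrix (Fin m) (Fin n) ℝ)

noncomputable def rightSingularVector (j : Fin n) : Fin n → ℝ :=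
  (isHermitian_conjTranspose_mul_self A).eigenvectorBasis j

noncomputable def leftSingularVector (j : Fin n) : Fin m → ℝ :=
  (singularValues A j)⁻¹ • (A *ᵥ rightSingularVector A j)

theorem singularValues_nonneg (j : Fin n) : 0 ≤ singularValues A j :=
  Real.sqrt_nonneg _

theorem sq_singularValues (j : Fin n) :
    singularValues A j ^ 2 = (isHermitian_conjTranspose_mul_self A).eigenvalues j :=
  Real.sq_sqrt (eigenvalues_conjTranspose_mul_self_nonneg A j)

theorem rightSingularVector_dotProduct (i j : Fin n) :
    rightSingularVector A i ⬝ᵥ rightSingularVector A j = if i = j then 1 else 0 := by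
  simpa [EuclideanSpace.inner_eq_star_dotProduct, dotProduct_comm, rightSingularVector] using
    orthonormal_iff_ite.mp (isHermitian_conjTranspose_mul_self A).eigenvectorBasis.orthonormal i j

theorem sum_dotProduct_smul_rightSingularVector (x : Fin n → ℝ) :
    ∑ j, (rightSingularVector A j ⬝ᵥ x) • rightSingularVector A j = x := by
  simpa [EuclideanSpace.inner_eq_star_dotProduct, dotProduct_comm, rightSingularVector] using
    congrArg WithLp.ofLp
      ((isHermitian_conjTranspose_mul_self A).eigenvectorBasis.sum_repr' (WithLp.toLp 2 x))

theorem conjTranspose_mul_self_mulVec_rightSingularVector (j : Fin n) :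
    (Aᴴ * A) *ᵥ rightSingularVector A j = singularValues A j ^ 2 • rightSingularVector A j := by
  rw [sq_singularValues]
  exact (isHermitian_conjTranspose_mul_self A).mulVec_eigenvectorBasis j

theorem mulVec_rightSingularVector_dotProduct (i j : Fin n) :
    (A *ᵥ rightSingularVector A i) ⬝ᵥ (A *ᵥ rightSingularVector A j) =
      if i = j then singularValues A j ^ 2 else 0 := by
  rw [mulVec_dotProduct_mulVec, conjTranspose_mul_self_mulVec_rightSingularVector, dotProduct_smul,
    rightSingularVector_dotProduct]
  split_ifs <;> simp

theorem mulVec_rightSingularVector (j : Fin n) :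
    A *ᵥ rightSingularVector A j = singularValues A j • leftSingularVector A j := by
  by_cases h : singularValues A j = 0
  · have := mulVec_rightSingularVector_dotProduct A j j
    rw [if_pos rfl, h, sq, zero_mul, dotProduct_self_eq_zero] at this
    rw [this, h, zero_smul]
  · rw [leftSingularVector, smul_smul, mul_inv_cancel₀ h, one_smul]

theorem mulVec_rightSingularVector_dotProduct_leftSingularVector (j : Fin n) :
    (A *ᵥ rightSingularVector A j) ⬝ᵥ leftSingularVector A j = singularValues A j := by
  rw [leftSingularVector, dotProduct_smul, mulVec_rightSingularVector_dotProduct, if_pos rfl,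
    smul_eq_mul, sq, ← mul_assoc, inv_mul_mul_self]

theorem leftSingularVector_dotProduct (i j : Fin n) :
    leftSingularVector A i ⬝ᵥ leftSingularVector A j =
      if i = j ∧ singularValues A j ≠ 0 then 1 else 0 := by
  rw [leftSingularVector, leftSingularVector, smul_dotProduct, dotProduct_smul,
    mulVec_rightSingularVector_dotProduct]
  by_cases hij : i = j
  · subst hij
    by_cases h : singularValues A i = 0
    · simp [h]
    · simp [h]; field_simp
  · simp [hij]

theorem mulVec_eq_sum_singularValues (x : Fin n → ℝ) :
    A *ᵥ x =
      ∑ j, (singularValues A j * (rightSingularVector A j ⬝ᵥ x)) • leftSingularVector A j := by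
  conv_lhs => rw [← sum_dotProduct_smul_rightSingularVector A x]
  simp only [mulVec_sum, mulVec_smul, mulVec_rightSingularVector, smul_smul, mul_comm]

end SingularVectors

section SubOrthonormal

variable {ι κ : Type*} [Fintype ι] [Fintype κ]

/-- Not `Orthonormal`, because the left singular vectors of the singular value `0` vanish
(`0⁻¹ = 0`). -/
def IsSubOrthonormal (w : ι → κ → ℝ) : Prop :=
  Pairwise (fun i j => w i ⬝ᵥ w j = 0) ∧ ∀ i, w i ⬝ᵥ w i ≤ 1

theorem IsSubOrthonormal.sum_sq_dotProduct_le {w : ι → κ → ℝ} (hw : IsSubOrthonormal w)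
    (z : κ → ℝ) : ∑ i, (w i ⬝ᵥ z) ^ 2 ≤ z ⬝ᵥ z := by
  set c := fun i => w i ⬝ᵥ z
  set v := ∑ i, c i • w i
  have hzv : z ⬝ᵥ v = ∑ i, c i ^ 2 := by
    rw [dotProduct_comm, sum_dotProduct]
    simp only [smul_dotProduct, smul_eq_mul, sq]
    rfl
  have hvv : v ⬝ᵥ v ≤ ∑ i, c i ^ 2 := by
    calc v ⬝ᵥ v = ∑ i, c i ^ 2 * (w i ⬝ᵥ w i) := by
          simp only [v, sum_dotProduct, smul_dotProduct, smul_eq_mul]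
          refine sum_congr rfl fun i _ => ?_
          rw [dotProduct_sum, sum_eq_single i (fun j _ hji => by rw [dotProduct_smul, hw.1 hji.symm,
            smul_zero]) (by simp), dotProduct_smul, smul_eq_mul]
          ring
      _ ≤ ∑ i, c i ^ 2 := sum_le_sum fun i _ => mul_le_of_le_one_right (sq_nonneg _) (hw.2 i)
  have hres : 0 ≤ (z - v) ⬝ᵥ (z - v) := Fintype.sum_nonneg fun _ => mul_self_nonneg _
  rw [sub_dotProduct, dotProduct_sub, dotProduct_sub, dotProduct_comm v z, hzv] at hres
  linarith

end SubOrthonormal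

section NuclearNorm

variable {m n : ℕ}

theorem isSubOrthonormal_rightSingularVector (A : Matrix (Fin m) (Fin n) ℝ) :
    IsSubOrthonormal (rightSingularVector A) :=
  ⟨fun i j hij => (rightSingularVector_dotProduct A i j).trans (if_neg hij),
    fun i => by rw [rightSingularVector_dotProduct, if_pos rfl]⟩

theorem isSubOrthonormal_leftSingularVector (A : Matrix (Fin m) (Fin n) ℝ) :
    IsSubOrthonormal (leftSingularVector A) :=
  ⟨fun i j hij => (leftSingularVector_dotProduct A i j).trans (if_neg (not_and_of_not_left _ hij)),
    fun i => by rw [leftSingularVector_dotProduct]; split_ifs <;> norm_num⟩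

theorem nuclearNorm_eq_sum_mulVec_dotProduct (A : Matrix (Fin m) (Fin n) ℝ) :
    nuclearNorm A = ∑ j, (A *ᵥ rightSingularVector A j) ⬝ᵥ leftSingularVector A j :=
  sum_congr rfl fun j _ => (mulVec_rightSingularVector_dotProduct_leftSingularVector A j).symm

theorem sum_mulVec_dotProduct_le_nuclearNorm {ι : Type*} [Fintype ι] (A : Matrix (Fin m) (Fin n) ℝ)
    {x : ι → Fin n → ℝ} {y : ι → Fin m → ℝ} (hx : IsSubOrthonormal x) (hy : IsSubOrthonormal y) :
    ∑ i, (A *ᵥ x i) ⬝ᵥ y i ≤ nuclearNorm A := by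
  set V := rightSingularVector A
  set U := leftSingularVector A
  have hV := (isSubOrthonormal_rightSingularVector A).2
  have hU := (isSubOrthonormal_leftSingularVector A).2
  have hcoeff : ∀ j, ∑ i, (V j ⬝ᵥ x i) * (U j ⬝ᵥ y i) ≤ 1 := fun j =>
    calc ∑ i, (V j ⬝ᵥ x i) * (U j ⬝ᵥ y i)
        ≤ √(∑ i, (V j ⬝ᵥ x i) ^ 2) * √(∑ i, (U j ⬝ᵥ y i) ^ 2) := Real.sum_mul_le_sqrt_mul_sqrt _ _ _
      _ ≤ √1 * √1 := by
        gcongr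
        · simpa only [dotProduct_comm (V j)] using (hx.sum_sq_dotProduct_le (V j)).trans (hV j)
        · simpa only [dotProduct_comm (U j)] using (hy.sum_sq_dotProduct_le (U j)).trans (hU j)
      _ = 1 := by simp
  calc ∑ i, (A *ᵥ x i) ⬝ᵥ y i
      = ∑ j, singularValues A j * ∑ i, (V j ⬝ᵥ x i) * (U j ⬝ᵥ y i) := by
        simp only [mulVec_eq_sum_singularValues A, sum_dotProduct, smul_dotProduct, smul_eq_mul,
          mul_sum]
        rw [sum_comm]
        exact sum_congr rfl fun j _ => sum_congr rfl fun i _ => by ring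
    _ ≤ ∑ j, singularValues A j * 1 :=
        sum_le_sum fun j _ => mul_le_mul_of_nonneg_left (hcoeff j) (singularValues_nonneg A j)
    _ = nuclearNorm A := by simp [nuclearNorm]

theorem nuclearNorm_add_le (A B : Matrix (Fin m) (Fin n) ℝ) :
    nuclearNorm (A + B) ≤ nuclearNorm A + nuclearNorm B := by
  rw [nuclearNorm_eq_sum_mulVec_dotProduct]
  simp only [add_mulVec, add_dotProduct, sum_add_distrib]
  exact add_le_add
    (sum_mulVec_dotProduct_le_nuclearNorm A (isSubOrthonormal_rightSingularVector (A + B))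
      (isSubOrthonormal_leftSingularVector (A + B)))
    (sum_mulVec_dotProduct_le_nuclearNorm B (isSubOrthonormal_rightSingularVector (A + B))
      (isSubOrthonormal_leftSingularVector (A + B)))

theorem sum_sq_singularValues (A : Matrix (Fin m) (Fin n) ℝ) :
    ∑ j, singularValues A j ^ 2 = ∑ i, ∑ j, A i j ^ 2 := by
  have := (isHermitian_conjTranspose_mul_self A).trace_eq_sum_eigenvalues
  simp only [RCLike.ofReal_real_eq_id, id] at this
  simp only [sq_singularValues, ← this, trace, Matrix.diag, mul_apply, conjTranspose_apply,
    star_trivial]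
  rw [sum_comm]
  simp [sq]

theorem card_singularValues_ne_zero (A : Matrix (Fin m) (Fin n) ℝ) :
    #{j | singularValues A j ≠ 0} = A.rank := by
  rw [← rank_conjTranspose_mul_self,
    (isHermitian_conjTranspose_mul_self A).rank_eq_card_non_zero_eigs, Fintype.card_subtype]
  congr! 2 with j
  rw [← sq_singularValues, pow_ne_zero_iff two_ne_zero]

theorem nuclearNorm_le_sqrt_rank_mul_frobeniusNorm (A : Matrix (Fin m) (Fin n) ℝ) :
    nuclearNorm A ≤ √A.rank * frobeniusNorm A := by
  set S : Finset (Fin n) := {j | singularValues A j ≠ 0}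
  calc nuclearNorm A = ∑ j ∈ S, 1 * singularValues A j := by
        rw [nuclearNorm, ← sum_filter_ne_zero]; simp [S]
    _ ≤ √(∑ j ∈ S, 1 ^ 2) * √(∑ j ∈ S, singularValues A j ^ 2) :=
        Real.sum_mul_le_sqrt_mul_sqrt _ _ _
    _ ≤ √A.rank * frobeniusNorm A := by
        rw [frobeniusNorm, ← sum_sq_singularValues, ← card_singularValues_ne_zero]
        gcongr
        · simp [S]
        · exact subset_univ S

end NuclearNorm

section LowRankApproximation

variable {m n : ℕ}

theorem frobeniusNorm_nonneg (A : Matrix (Fin m) (Fin n) ℝ) : 0 ≤ frobeniusNorm A :=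
  Real.sqrt_nonneg _

theorem nuclearNorm_le_of_rank_le (A B : Matrix (Fin m) (Fin n) ℝ) {k : ℕ} (hB : B.rank ≤ k) :
    nuclearNorm A ≤ √m * frobeniusNorm (A - B) + √k * frobeniusNorm B := by
  have hAB : (A - B).rank ≤ m := (rank_le_card_height _).trans_eq (Fintype.card_fin m)
  calc nuclearNorm A = nuclearNorm ((A - B) + B) := by rw [sub_add_cancel]
    _ ≤ nuclearNorm (A - B) + nuclearNorm B := nuclearNorm_add_le _ _
    _ ≤ √m * frobeniusNorm (A - B) + √k * frobeniusNorm B := by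
      gcongr
      · exact (nuclearNorm_le_sqrt_rank_mul_frobeniusNorm _).trans
          (mul_le_mul_of_nonneg_right (by gcongr) (frobeniusNorm_nonneg _))
      · exact (nuclearNorm_le_sqrt_rank_mul_frobeniusNorm _).trans
          (mul_le_mul_of_nonneg_right (by gcongr) (frobeniusNorm_nonneg _))

theorem frobeniusNorm_le_of_sum_sq_row_le (A : Matrix (Fin m) (Fin n) ℝ) {c : ℝ}
    (h : ∀ i, ∑ j, A i j ^ 2 ≤ c) : frobeniusNorm A ≤ √(m * c) := by
  rw [frobeniusNorm]
  gcongr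
  simpa using sum_le_sum fun i (_ : i ∈ univ) => h i

theorem rank_submatrix_comp_le {ι κ ι' : Type*} [Fintype κ] (A : Matrix ι κ ℝ) {k : ℕ}
    (r : Fin k → ι) (g : ι' → Fin k) : (A.submatrix (r ∘ g) id).rank ≤ k :=
  (rank_submatrix_le (A.submatrix r id) g id).trans
    ((rank_le_card_height _).trans_eq (Fintype.card_fin k))

end LowRankApproximation

theorem exists_fin_bucket_abs_sub_le {ι : Type*} (t : ι → ℝ) {k : ℕ} (hk : 0 < k) {δ : ℝ}
    (hδ : 0 < δ) (ht : ∀ i, t i ∈ Set.Icc 0 (k * δ)) :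
    ∃ g : ι → Fin k, ∀ i j, g i = g j → |t i - t j| ≤ δ := by
  let g : ι → Fin k := fun i => ⟨min (k - 1) ⌊t i / δ⌋₊, by omega⟩
  have hg : ∀ i, (g i : ℝ) ≤ t i / δ ∧ t i / δ ≤ g i + 1 := by
    intro i
    have hu0 : 0 ≤ t i / δ := div_nonneg (ht i).1 hδ.le
    have huk : t i / δ ≤ k := (div_le_iff₀ hδ).2 (ht i).2
    simp only [g, Nat.cast_min]
    refine ⟨min_le_of_right_le (Nat.floor_le hu0), ?_⟩
    rcases min_choice ((k - 1 : ℕ) : ℝ) ⌊t i / δ⌋₊ with h | h <;> rw [h]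
    · rw [Nat.cast_sub hk, Nat.cast_one, sub_add_cancel]; exact huk
    · exact (Nat.lt_floor_add_one _).le
  refine ⟨g, fun i j hij => ?_⟩
  have hi := hg i
  have hj := hg j
  rw [hij] at hi
  have : |t i / δ - t j / δ| ≤ 1 := abs_sub_le_iff.2 ⟨by linarith, by linarith⟩
  rwa [← sub_div, abs_div, abs_of_pos hδ, div_le_one hδ] at this

theorem sum_sq_sub_le_sum_sub_add_two {ι : Type*} [Fintype ι] [DecidableEq ι] {x y : ι → ℝ}
    (hx : ∀ l, x l ∈ Set.Icc 0 1) (hy : ∀ l, y l ∈ Set.Icc 0 1) (a : ι)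
    (hxy : ∀ l ≠ a, y l ≤ x l) : ∑ l, (x l - y l) ^ 2 ≤ ∑ l, (x l - y l) + 2 := by
  rw [← add_sum_erase univ _ (mem_univ a), ← add_sum_erase univ _ (mem_univ a)]
  have ha : (x a - y a) ^ 2 ≤ x a - y a + 2 := by
    obtain ⟨⟨hx0, hx1⟩, ⟨hy0, hy1⟩⟩ := And.intro (hx a) (hy a)
    nlinarith
  have hrest : ∑ l ∈ univ.erase a, (x l - y l) ^ 2 ≤ ∑ l ∈ univ.erase a, (x l - y l) :=
    sum_le_sum fun l hl => by
      have hle := hxy l (ne_of_mem_erase hl)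
      obtain ⟨⟨hx0, hx1⟩, ⟨hy0, hy1⟩⟩ := And.intro (hx l) (hy l)
      nlinarith
  linarith

theorem sum_sq_sub_row_le_abs_sub_add_two {ι β : Type*} [Fintype ι] [DecidableEq ι] [LinearOrder β]
    {M : Matrix ι ι ℝ} {rk : ι → β} (hM : ∀ i j, M i j ∈ Set.Icc 0 1)
    (hrk : Function.Injective rk) (hdom : ∀ i j, rk j < rk i → ∀ l ≠ i, M j l ≤ M i l) (i j : ι) :
    ∑ l, (M i l - M j l) ^ 2 ≤ |∑ l, M i l - ∑ l, M j l| + 2 := by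
  rcases lt_trichotomy (rk j) (rk i) with h | h | h
  · calc _ ≤ ∑ l, (M i l - M j l) + 2 :=
          sum_sq_sub_le_sum_sub_add_two (hM i) (hM j) i (hdom i j h)
      _ ≤ _ := by rw [sum_sub_distrib]; gcongr; exact le_abs_self _
  · simp [hrk h]
  · calc _ = ∑ l, (M j l - M i l) ^ 2 := sum_congr rfl fun l _ => by ring
      _ ≤ ∑ l, (M j l - M i l) + 2 :=
          sum_sq_sub_le_sum_sub_add_two (hM j) (hM i) j (hdom j i h)
      _ ≤ _ := by rw [sum_sub_distrib, abs_sub_comm]; gcongr; exact le_abs_self _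

theorem nuclearNorm_le_of_rows_dominated {n : ℕ} {β : Type*} [LinearOrder β]
    {M : Matrix (Fin n) (Fin n) ℝ} {rk : Fin n → β} (hM : ∀ i j, M i j ∈ Set.Icc 0 1)
    (hrk : Function.Injective rk) (hdom : ∀ i j, rk j < rk i → ∀ l ≠ i, M j l ≤ M i l)
    {k : ℕ} (hk : 1 ≤ k) (hkn : k ≤ n) :
    nuclearNorm M ≤ √3 * (n : ℝ) ^ ((3:ℝ)/2) / √k + n * √k := by
  have hk0 : (0:ℝ) < k := by exact_mod_cast hk
  have hn0 : (0:ℝ) < n := by exact_mod_cast hk.trans hkn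
  have hkn' : (k:ℝ) ≤ n := by exact_mod_cast hkn
  have : Nonempty (Fin n) := ⟨⟨0, by omega⟩⟩
  obtain ⟨g, hg⟩ := exists_fin_bucket_abs_sub_le (fun i => ∑ l, M i l) hk (div_pos hn0 hk0)
    fun i => ⟨sum_nonneg fun l _ => (hM i l).1, by
      rw [mul_div_cancel₀ _ hk0.ne']
      simpa using sum_le_sum fun l (_ : l ∈ univ) => (hM i l).2⟩
  -- `N` replaces every row of `M` by a fixed representative of its bucket
  set N := M.submatrix (Function.invFun g ∘ g) id
  have hMN : ∀ i, ∑ l, (M - N) i l ^ 2 ≤ 3 * n / k := fun i => by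
    have hbucket := hg _ _ (Function.invFun_eq ⟨i, rfl⟩).symm
    have hnk : 1 ≤ (n:ℝ) / k := (one_le_div hk0).2 hkn'
    calc ∑ l, (M - N) i l ^ 2 = ∑ l, (M i l - M (Function.invFun g (g i)) l) ^ 2 := rfl
      _ ≤ |∑ l, M i l - ∑ l, M (Function.invFun g (g i)) l| + 2 :=
          sum_sq_sub_row_le_abs_sub_add_two hM hrk hdom _ _
      _ ≤ n / k + 2 * (n / k) := by gcongr; linarith
      _ = 3 * n / k := by ring
  have hN : ∀ i, ∑ l, N i l ^ 2 ≤ n := fun i => by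
    simpa [N] using sum_le_sum fun l (_ : l ∈ univ) => pow_le_one₀ (n := 2) (hM _ l).1 (hM _ l).2
  have hpow : (n:ℝ) ^ ((3:ℝ)/2) = n * √n := by
    rw [show (3:ℝ)/2 = 1 + 1/2 by norm_num, Real.rpow_add hn0, Real.rpow_one, Real.sqrt_eq_rpow]
  calc nuclearNorm M ≤ √n * frobeniusNorm (M - N) + √k * frobeniusNorm N :=
        nuclearNorm_le_of_rank_le M N (rank_submatrix_comp_le M _ g)
    _ ≤ √n * √(n * (3 * n / k)) + √k * √(n * n) := by
        gcongr
        · exact frobeniusNorm_le_of_sum_sq_row_le _ hMN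
        · exact frobeniusNorm_le_of_sum_sq_row_le _ hN
    _ = √3 * (n : ℝ) ^ ((3:ℝ)/2) / √k + n * √k := by
        rw [show (n:ℝ) * (3 * n / k) = n ^ 2 * (3 / k) by ring, Real.sqrt_mul (sq_nonneg _),
          Real.sqrt_sq hn0.le, Real.sqrt_div (by norm_num), Real.sqrt_mul_self hn0.le, hpow]
        ring

theorem sqrt_three_mul_rpow_div_add_le {x s : ℝ} (hs : 0 < s) (hlow : s ^ 4 ≤ x)
    (hhigh : x ≤ 4 * s ^ 4) : √3 * x ^ ((3:ℝ)/2) / s + x * s ≤ 4 * x ^ ((5:ℝ)/4) := by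
  have hx : 0 < x := (pow_pos hs 4).trans_le hlow
  set q := x ^ ((1:ℝ)/4) with hq
  have hq0 : 0 < q := Real.rpow_pos_of_pos hx _
  have hpow : ∀ k : ℕ, x ^ ((k:ℝ)/4) = q ^ k := fun k => by
    rw [hq, ← Real.rpow_mul_natCast hx.le]; ring_nf
  have hx4 : x = q ^ 4 := by rw [← hpow 4]; norm_num
  rw [show (3:ℝ)/2 = ((6:ℕ):ℝ)/4 by norm_num, show (5:ℝ)/4 = ((5:ℕ):ℝ)/4 by norm_num, hpow, hpow,
    hx4]
  rw [hx4] at hlow hhigh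
  have hs_le : s ≤ q := le_of_pow_le_pow_left₀ (by norm_num) hq0.le hlow
  have hq_le : q ≤ √2 * s := by
    refine le_of_pow_le_pow_left₀ (n := 4) (by norm_num) (by positivity) ?_
    rwa [mul_pow, show √2 ^ 4 = 4 by rw [show 4 = 2 * 2 from rfl, pow_mul]; norm_num]
  have h6 : √3 * √2 ≤ 3 := by
    rw [← Real.sqrt_mul (by norm_num), Real.sqrt_le_left (by norm_num)]; norm_num
  have hterm1 : √3 * q ^ 6 / s ≤ 3 * q ^ 5 := by
    rw [div_le_iff₀ hs]
    calc √3 * q ^ 6 = q ^ 5 * (√3 * q) := by ring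
      _ ≤ q ^ 5 * (√3 * (√2 * s)) := by gcongr
      _ = q ^ 5 * ((√3 * √2) * s) := by ring
      _ ≤ q ^ 5 * (3 * s) := by gcongr
      _ = 3 * q ^ 5 * s := by ring
  have hterm2 : q ^ 4 * s ≤ q ^ 5 := by
    calc q ^ 4 * s ≤ q ^ 4 * q := by gcongr
      _ = q ^ 5 := by ring
  linarith

theorem sqrt_three_mul_rpow_div_add_le_of_nat_sqrt {n : ℕ} (hn : 0 < n) :
    √3 * (n : ℝ) ^ ((3:ℝ)/2) / √(Nat.sqrt n) + n * √(Nat.sqrt n) ≤ 4 * (n : ℝ) ^ ((5:ℝ)/4) := by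
  set k := Nat.sqrt n
  have hk : 0 < k := Nat.sqrt_pos.2 hn
  have hlow : k ^ 2 ≤ n := Nat.sqrt_le' n
  have hhigh : n ≤ 4 * k ^ 2 := by nlinarith [Nat.lt_succ_sqrt' n]
  have h4 : √(k:ℝ) ^ 4 = (k:ℝ) ^ 2 := by
    rw [show 4 = 2 * 2 from rfl, pow_mul, Real.sq_sqrt (Nat.cast_nonneg _)]
  exact sqrt_three_mul_rpow_div_add_le (by positivity) (by rw [h4]; exact_mod_cast hlow)
    (by rw [h4]; exact_mod_cast hhigh)

theorem bradleyTerry_nuclearNorm_le :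
    ∃ C : ℝ, 0 < C ∧
      ∀ (n : ℕ) (p : Matrix (Fin n) (Fin n) ℝ),
        (∀ i j, p i j ∈ Set.Icc (0:ℝ) 1) →
        (∀ i j, i ≠ j → p j i = 1 - p i j) →
        ∀ (rk : Fin n → Fin n), Function.Bijective rk →
        (∀ i j l : Fin n, rk j < rk i → l ≠ i → l ≠ j → p j l ≤ p i l) →
        ∀ (M : Matrix (Fin n) (Fin n) ℝ),
          (∀ i j, M i j = if i = j then 0 else p i j) →
          (∀ k : ℕ, 1 ≤ k → k < n →
            nuclearNorm M ≤
              Real.sqrt 3 * (n : ℝ) ^ ((3:ℝ)/2) / Real.sqrt (k : ℝ)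
                + (n : ℝ) * Real.sqrt (k : ℝ)) ∧
          nuclearNorm M ≤ C * (n : ℝ) ^ ((5:ℝ)/4) := by
  refine ⟨4, by norm_num, fun n p hp _ rk hrk hmono M hM => ?_⟩
  have hM01 : ∀ i j, M i j ∈ Set.Icc (0:ℝ) 1 := fun i j => by
    rw [hM]
    split_ifs
    · simp
    · exact hp i j
  have hdom : ∀ i j, rk j < rk i → ∀ l ≠ i, M j l ≤ M i l := fun i j h l hli => by
    rcases eq_or_ne l j with rfl | hlj
    · rw [hM l l, if_pos rfl]; exact (hM01 i l).1
    · rw [hM, hM, if_neg hlj.symm, if_neg hli.symm]; exact hmono i j l h hli hlj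
  have hbound := fun k (hk : 1 ≤ k) (hkn : k ≤ n) =>
    nuclearNorm_le_of_rows_dominated hM01 hrk.injective hdom hk hkn
  refine ⟨fun k hk hkn => hbound k hk hkn.le, ?_⟩
  rcases Nat.eq_zero_or_pos n with rfl | hn
  · simp [nuclearNorm]
  · exact (hbound _ (Nat.sqrt_pos.2 hn) (Nat.sqrt_le_self n)).trans
      (sqrt_three_mul_rpow_div_add_le_of_nat_sqrt hn)
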